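/- Let G be a connected K_4-free graph whose diamonds are mutually edge-disjoint, and let G^- be the graph obtained from G by deleting all edges lying on triangles. If G^- is connected, then p(G) = |E(G)| − |V(G)| − 2t(G) + d(G) + 1, where t(G) and d(G) are the numbers of triangles and diamonds of G respectively. -/

import Mathlib

open SimpleGraph

/-- Adjacency in the phylogeny graph of a digraph `D`: `u ≠ v` and either an arc between
them or a common out-neighbor. -/
def phyAdj {α : Type*} (D : α → α → Prop) (u v : α) : Prop :=
  u ≠ v ∧ (D u v ∨ D v u ∨ ∃ w, D u w ∧ D v w)

/-- `D`, a digraph on the vertices of `G` together with `r` extra vertices, is a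
phylogeny digraph for `G`: it is acyclic, `G` is the subgraph of the phylogeny graph
induced on `V(G)`, and there are no arcs from the extra vertices into `V(G)`. -/
def IsPhyDigraphOn {V : Type*} (G : SimpleGraph V) (r : ℕ)
    (D : (V ⊕ Fin r) → (V ⊕ Fin r) → Prop) : Prop :=
  (∀ x, ¬ Relation.TransGen D x x) ∧
  (∀ u v : V, G.Adj u v ↔ phyAdj D (Sum.inl u) (Sum.inl v)) ∧
  (∀ (j : Fin r) (v : V), ¬ D (Sum.inr j) (Sum.inl v))

/-- The phylogeny number `p(G)`: the least number of extra vertices in a phylogeny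
digraph for `G`. -/
noncomputable def phylogenyNumber {V : Type*} (G : SimpleGraph V) : ℕ :=
  sInf {r | ∃ D, IsPhyDigraphOn G r D}

/-- The competition number `k(G)`: the least `k` so that `G` together with `k` isolated
vertices is the competition graph of an acyclic digraph. -/
noncomputable def competitionNumber {V : Type*} (G : SimpleGraph V) : ℕ :=
  sInf {k | ∃ D : (V ⊕ Fin k) → (V ⊕ Fin k) → Prop,
    (∀ x, ¬ Relation.TransGen D x x) ∧
    (∀ a b, (a ≠ b ∧ ∃ c, D a c ∧ D b c) ↔
      (∃ u v : V, a = Sum.inl u ∧ b = Sum.inl v ∧ G.Adj u v))}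

/-- The number of triangles of `G`. -/
noncomputable def triangleCount {V : Type*} (G : SimpleGraph V) : ℕ :=
  Set.ncard {S : Finset V | G.IsNClique 3 S}

/-- `S` carries a diamond (`K₄` minus an edge) subgraph of `G`. -/
def IsDiamondOn {V : Type*} (G : SimpleGraph V) (S : Finset V) : Prop :=
  ∃ x y z w : V, (S : Set V) = {x, y, z, w} ∧
    x ≠ y ∧ x ≠ z ∧ x ≠ w ∧ y ≠ z ∧ y ≠ w ∧ z ≠ w ∧
    G.Adj x y ∧ G.Adj x z ∧ G.Adj x w ∧ G.Adj y z ∧ G.Adj z w ∧ ¬ G.Adj y w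

/-- The number of diamonds of `G`. -/
noncomputable def diamondCount {V : Type*} (G : SimpleGraph V) : ℕ :=
  Set.ncard {S : Finset V | IsDiamondOn G S}

/-- The diamonds of `G` are mutually edge-disjoint. -/
def EdgeDisjointDiamonds {V : Type*} (G : SimpleGraph V) : Prop :=
  ∀ S₁ S₂ : Finset V, IsDiamondOn G S₁ → IsDiamondOn G S₂ → S₁ ≠ S₂ →
    ∀ u v, G.Adj u v → u ∈ S₁ → v ∈ S₁ → u ∈ S₂ → v ∈ S₂ → False

/-- `G⁻`: the graph obtained from `G` by deleting every edge lying on a triangle. -/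
def triangleEdgeDeleted {V : Type*} (G : SimpleGraph V) : SimpleGraph V where
  Adj u v := G.Adj u v ∧ ∀ w, ¬ (G.Adj u w ∧ G.Adj v w)
  symm := ⟨fun u v h => ⟨h.1.symm, fun w hw => h.2 w ⟨hw.2, hw.1⟩⟩⟩
  loopless := ⟨fun v h => G.loopless.1 v h.1⟩

/-- The edge clique cover number `θₑ(G)`. -/
noncomputable def edgeCliqueCoverNumber {V : Type*} (G : SimpleGraph V) : ℕ :=
  sInf {n | ∃ F : Fin n → Set V, (∀ i, G.IsClique (F i)) ∧
    ∀ u v, G.Adj u v → ∃ i, u ∈ F i ∧ v ∈ F i}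

/-- `s` is a maximal clique of the graph `G`. -/
def IsMaxCliqueOf {V : Type*} (G : SimpleGraph V) (s : Set V) : Prop :=
  G.IsClique s ∧ ∀ t, G.IsClique t → s ⊆ t → s = t

/-- `s` is a clique of the subgraph `H` of `G`. -/
def CliqueInSub {V : Type*} {G : SimpleGraph V} (H : G.Subgraph) (s : Set V) : Prop :=
  s ⊆ H.verts ∧ s.Pairwise H.Adj

/-- `s` is a maximal clique of the subgraph `H` of `G`. -/
def MaxCliqueInSub {V : Type*} {G : SimpleGraph V} (H : G.Subgraph) (s : Set V) : Prop :=
  CliqueInSub H s ∧ ∀ t, CliqueInSub H t → s ⊆ t → s = t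

/-- `s` is a clique of the graph with adjacency `X` and vertex set `S`. -/
def CliqueRel {α : Type*} (X : SimpleGraph α) (S s : Set α) : Prop :=
  s ⊆ S ∧ X.IsClique s

/-- `s` is a maximal clique of the graph with adjacency `X` and vertex set `S`. -/
def MaxCliqueRel {α : Type*} (X : SimpleGraph α) (S s : Set α) : Prop :=
  CliqueRel X S s ∧ ∀ t, CliqueRel X S t → s ⊆ t → s = t

/-- `v` is a cut-vertex of `G`: some two other vertices are connected in `G` but every
walk between them passes through `v`. -/
def IsCutVertex {V : Type*} (G : SimpleGraph V) (v : V) : Prop :=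
  ∃ u w, u ≠ v ∧ w ≠ v ∧ G.Reachable u w ∧ ∀ p : G.Walk u w, v ∈ p.support

/-- `B` is a block of `G`: a maximal connected subgraph without a cut-vertex. -/
def IsBlockSub {V : Type*} {G : SimpleGraph V} (B : G.Subgraph) : Prop :=
  B.coe.Connected ∧ (∀ v, ¬ IsCutVertex B.coe v) ∧
  ∀ B' : G.Subgraph, B ≤ B' → B'.coe.Connected →
    (∀ v, ¬ IsCutVertex B'.coe v) → B' = B

open Finset
set_option linter.unusedSectionVars false
set_option maxHeartbeats 1000000
namespace Stmt14Aux
open scoped Classical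
variable {V : Type*} [Fintype V] {G : SimpleGraph V}

lemma ted_adj {u v : V} : (triangleEdgeDeleted G).Adj u v ↔
    G.Adj u v ∧ ∀ w, ¬ (G.Adj u w ∧ G.Adj v w) := Iff.rfl

noncomputable def tris (G : SimpleGraph V) : Finset (Finset V) :=
  univ.filter (fun S => G.IsNClique 3 S)

lemma mem_tris {T : Finset V} : T ∈ tris G ↔ G.IsNClique 3 T := by simp [tris]

noncomputable def dias (G : SimpleGraph V) : Finset (Finset V) :=
  univ.filter (fun S => IsDiamondOn G S)

lemma mem_dias {S : Finset V} : S ∈ dias G ↔ IsDiamondOn G S := by simp [dias]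

lemma exists_third {T : Finset V} {u v : V} (huv : u ≠ v) (hu : u ∈ T) (hv : v ∈ T)
    (hc : T.card = 3) : ∃ x, x ≠ u ∧ x ≠ v ∧ T = {u, v, x} := by
  classical
  have hsub : ({u, v} : Finset V) ⊆ T := by
    intro a ha; simp at ha; rcases ha with rfl | rfl <;> assumption
  have h2 : ({u, v} : Finset V).card = 2 := by
    rw [card_insert_of_notMem (by simp [huv]), card_singleton]
  have h1 : (T \ {u, v}).card = 1 := by
    rw [card_sdiff_of_subset hsub, hc, h2]
  obtain ⟨x, hx⟩ := card_eq_one.mp h1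
  have hxm : x ∈ T \ ({u, v} : Finset V) := by rw [hx]; simp
  rw [mem_sdiff, mem_insert, mem_singleton] at hxm
  push_neg at hxm
  refine ⟨x, hxm.2.1, hxm.2.2, ?_⟩
  apply Finset.eq_of_subset_of_card_le
  · intro a ha
    by_cases h : a ∈ ({u, v} : Finset V)
    · simp at h; rcases h with rfl|rfl <;> simp
    · have : a ∈ T \ ({u,v} : Finset V) := mem_sdiff.mpr ⟨ha, h⟩
      rw [hx] at this; simp at this; simp [this]
  · rw [hc]
    exact (card_insert_le _ _).trans (Nat.add_le_add_right ((card_insert_le _ _).trans (by rw [card_singleton])) 1)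

lemma diamond_of_two_tris (hk4 : G.CliqueFree 4) {T₁ T₂ : Finset V} {u v : V}
    (h₁ : G.IsNClique 3 T₁) (h₂ : G.IsNClique 3 T₂) (hne : T₁ ≠ T₂)
    (huv : u ≠ v) (hu₁ : u ∈ T₁) (hv₁ : v ∈ T₁) (hu₂ : u ∈ T₂) (hv₂ : v ∈ T₂) :
    IsDiamondOn G (T₁ ∪ T₂) := by
  obtain ⟨x, hxu, hxv, hT₁⟩ := exists_third huv hu₁ hv₁ h₁.2
  obtain ⟨y, hyu, hyv, hT₂⟩ := exists_third huv hu₂ hv₂ h₂.2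
  have hadj : ∀ a b : V, a ∈ T₁ → b ∈ T₁ → a ≠ b → G.Adj a b := fun a b ha hb hab =>
    h₁.1 ha hb hab
  have hadj₂ : ∀ a b : V, a ∈ T₂ → b ∈ T₂ → a ≠ b → G.Adj a b := fun a b ha hb hab =>
    h₂.1 ha hb hab
  have hxT : x ∈ T₁ := by rw [hT₁]; simp
  have hyT : y ∈ T₂ := by rw [hT₂]; simp
  have hxy : x ≠ y := by rintro rfl; exact hne (hT₁.trans hT₂.symm)
  have huvA : G.Adj u v := hadj u v hu₁ hv₁ huv
  have hux : G.Adj u x := hadj u x hu₁ hxT (Ne.symm hxu)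
  have hvx : G.Adj v x := hadj v x hv₁ hxT (Ne.symm hxv)
  have huy : G.Adj u y := hadj₂ u y hu₂ hyT (Ne.symm hyu)
  have hvy : G.Adj v y := hadj₂ v y hv₂ hyT (Ne.symm hyv)
  have hnxy : ¬ G.Adj x y := by
    intro hA
    have c3 : G.IsNClique 3 ({v, x, y} : Finset V) :=
      SimpleGraph.is3Clique_triple_iff.mpr ⟨hvx, hvy, hA⟩
    have c4 : G.IsNClique 4 ({u, v, x, y} : Finset V) := by
      refine c3.insert ?_
      intro b hb
      simp only [mem_insert, mem_singleton] at hb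
      rcases hb with rfl | rfl | rfl
      exacts [huvA, hux, huy]
    exact hk4 _ c4
  refine ⟨u, x, v, y, ?_, Ne.symm hxu, huv, Ne.symm hyu, hxv, hxy, Ne.symm hyv,
    hux, huvA, huy, hvx.symm, hvy, hnxy⟩
  rw [hT₁, hT₂]
  push_cast [coe_union]
  ext t
  simp only [Set.mem_union, coe_insert, Set.mem_insert_iff, coe_singleton, Set.mem_singleton_iff]
  tauto

lemma tri_in_diamond {x y z w : V}
    (hxy : x ≠ y) (hxz : x ≠ z) (hxw : x ≠ w) (hyz : y ≠ z) (hyw : y ≠ w) (hzw : z ≠ w)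
    (hnyw : ¬ G.Adj y w) {T : Finset V} (hT : G.IsNClique 3 T)
    (hsub : T ⊆ ({x, y, z, w} : Finset V)) :
    T = {x, y, z} ∨ T = {x, z, w} := by
  have hor : y ∉ T ∨ w ∉ T := by
    by_contra h
    push_neg at h
    exact hnyw (hT.1 h.1 h.2 hyw)
  rcases hor with hy | hw
  · right
    apply Finset.eq_of_subset_of_card_le
    · intro t ht
      have := hsub ht
      simp only [mem_insert, mem_singleton] at this ⊢
      rcases this with rfl | rfl | rfl | rfl
      · left; rfl
      · exact absurd ht hy
      · right; left; rfl
      · right; right; rfl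
    · rw [hT.2]
      refine (card_insert_le _ _).trans ?_
      exact Nat.add_le_add_right ((card_insert_le _ _).trans (by rw [card_singleton])) 1
  · left
    apply Finset.eq_of_subset_of_card_le
    · intro t ht
      have := hsub ht
      simp only [mem_insert, mem_singleton] at this ⊢
      rcases this with rfl | rfl | rfl | rfl
      · left; rfl
      · right; left; rfl
      · right; right; rfl
      · exact absurd ht hw
    · rw [hT.2]
      refine (card_insert_le _ _).trans ?_
      exact Nat.add_le_add_right ((card_insert_le _ _).trans (by rw [card_singleton])) 1

/-- diamond as a finset literal -/
lemma diamond_finset {S : Finset V} {x y z w : V} (h : (S : Set V) = {x, y, z, w}) :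
    S = ({x, y, z, w} : Finset V) := by
  apply Finset.coe_injective
  rw [h]; simp

/-- the triangles of `G` containing the edge `e` -/
noncomputable def trisOn (G : SimpleGraph V) (e : Sym2 V) : Finset (Finset V) :=
  (tris G).filter (fun T => e ∈ T.sym2)

lemma mem_trisOn {e : Sym2 V} {T : Finset V} :
    T ∈ trisOn G e ↔ G.IsNClique 3 T ∧ e ∈ T.sym2 := by
  simp [trisOn, mem_tris]

/-- each edge lies in at most two triangles -/
lemma trisOn_card_le_two (hk4 : G.CliqueFree 4) (hdiam : EdgeDisjointDiamonds G)
    {u v : V} (huv : G.Adj u v) : (trisOn G s(u, v)).card ≤ 2 := by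
  by_contra h
  push_neg at h
  obtain ⟨T₁, T₂, T₃, hT₁, hT₂, hT₃, h12, h13, h23⟩ := Finset.two_lt_card_iff.mp h
  rw [mem_trisOn, Finset.mk_mem_sym2_iff] at hT₁ hT₂ hT₃
  have hne := huv.ne
  have hS : IsDiamondOn G (T₁ ∪ T₂) :=
    diamond_of_two_tris hk4 hT₁.1 hT₂.1 h12 hne hT₁.2.1 hT₁.2.2 hT₂.2.1 hT₂.2.2
  obtain ⟨x, y, z, w, hset, hxy, hxz, hxw, hyz, hyw, hzw, axy, axz, axw, ayz, azw, nyw⟩ := hS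
  have hSf := diamond_finset hset
  by_cases hsub : T₃ ⊆ T₁ ∪ T₂
  · -- all three triangles inside the diamond: pigeonhole
    have e1 := tri_in_diamond hxy hxz hxw hyz hyw hzw nyw hT₁.1 (by rw [← hSf]; exact subset_union_left)
    have e2 := tri_in_diamond hxy hxz hxw hyz hyw hzw nyw hT₂.1 (by rw [← hSf]; exact subset_union_right)
    have e3 := tri_in_diamond hxy hxz hxw hyz hyw hzw nyw hT₃.1 (by rw [← hSf]; exact hsub)
    rcases e1 with rfl | rfl <;> rcases e2 with e2 | e2 <;> rcases e3 with e3 | e3 <;>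
      first
        | exact h12 e2.symm
        | exact h13 e3.symm
        | exact h23 (e3.trans e2.symm)
        | exact h23 (e2.trans e3.symm)
  · have hS' : IsDiamondOn G (T₁ ∪ T₃) :=
      diamond_of_two_tris hk4 hT₁.1 hT₃.1 h13 hne hT₁.2.1 hT₁.2.2 hT₃.2.1 hT₃.2.2
    have hne' : T₁ ∪ T₂ ≠ T₁ ∪ T₃ := by
      intro hEq
      exact hsub (hEq ▸ subset_union_right)
    exact hdiam _ _ ⟨x, y, z, w, hset, hxy, hxz, hxw, hyz, hyw, hzw, axy, axz, axw, ayz, azw, nyw⟩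
      hS' hne' u v huv (subset_union_left hT₁.2.1) (subset_union_left hT₁.2.2)
      (subset_union_left hT₁.2.1) (subset_union_left hT₁.2.2)

end Stmt14Aux

namespace Stmt14Aux
variable {V : Type*} [Fintype V] {G : SimpleGraph V}
open scoped Classical

lemma diamond_unique (hdiam : EdgeDisjointDiamonds G) {T S₁ S₂ : Finset V}
    (hT : G.IsNClique 3 T) (h₁ : IsDiamondOn G S₁) (h₂ : IsDiamondOn G S₂)
    (hs₁ : T ⊆ S₁) (hs₂ : T ⊆ S₂) : S₁ = S₂ := by
  obtain ⟨a, b, c, hab, hac, hbc, rfl⟩ := Finset.card_eq_three.mp hT.2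
  by_contra hne
  have hadj : G.Adj a b := hT.1 (by simp) (by simp) hab
  exact hdiam S₁ S₂ h₁ h₂ hne a b hadj (hs₁ (by simp)) (hs₁ (by simp))
    (hs₂ (by simp)) (hs₂ (by simp))

lemma edge_decomp {e : Sym2 V} (he : e ∈ G.edgeFinset) :
    ∃ u v, G.Adj u v ∧ e = s(u, v) := by
  induction e with
  | _ u v =>
    rw [mem_edgeFinset, mem_edgeSet] at he
    exact ⟨u, v, he, rfl⟩

/-- description of the triangles on the central edge of a diamond -/
lemma trisOn_central (hk4 : G.CliqueFree 4) (hdiam : EdgeDisjointDiamonds G)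
    {x y z w : V}
    (hxy : x ≠ y) (hxz : x ≠ z) (hxw : x ≠ w) (hyz : y ≠ z) (hyw : y ≠ w) (hzw : z ≠ w)
    (axy : G.Adj x y) (axz : G.Adj x z) (axw : G.Adj x w) (ayz : G.Adj y z)
    (azw : G.Adj z w) (nyw : ¬ G.Adj y w) :
    trisOn G s(x, z) = {({x, y, z} : Finset V), ({x, z, w} : Finset V)} := by
  have hSd : IsDiamondOn G ({x, y, z, w} : Finset V) :=
    ⟨x, y, z, w, by simp, hxy, hxz, hxw, hyz, hyw, hzw, axy, axz, axw, ayz, azw, nyw⟩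
  have hT1 : ({x, y, z} : Finset V) ∈ trisOn G s(x, z) := by
    rw [mem_trisOn, Finset.mk_mem_sym2_iff]
    exact ⟨SimpleGraph.is3Clique_triple_iff.mpr ⟨axy, axz, ayz⟩, by simp, by simp⟩
  have hT2 : ({x, z, w} : Finset V) ∈ trisOn G s(x, z) := by
    rw [mem_trisOn, Finset.mk_mem_sym2_iff]
    exact ⟨SimpleGraph.is3Clique_triple_iff.mpr ⟨axz, axw, azw⟩, by simp, by simp⟩
  have hne12 : ({x, y, z} : Finset V) ≠ ({x, z, w} : Finset V) := by
    intro h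
    have : y ∈ ({x, z, w} : Finset V) := h ▸ (by simp : y ∈ ({x, y, z} : Finset V))
    simp only [mem_insert, mem_singleton] at this
    rcases this with h' | h' | h'
    exacts [hxy h'.symm, hyz h', hyw h']
  apply Finset.Subset.antisymm
  · intro T hT
    have hTm := hT
    rw [mem_trisOn, Finset.mk_mem_sym2_iff] at hTm
    obtain ⟨hTtri, hxT, hzT⟩ := hTm
    by_cases hT1e : T = ({x, y, z} : Finset V)
    · simp [hT1e]
    · have hS' : IsDiamondOn G (T ∪ {x, y, z}) :=
        diamond_of_two_tris hk4 hTtri (SimpleGraph.is3Clique_triple_iff.mpr ⟨axy, axz, ayz⟩)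
          hT1e axz.ne hxT hzT (by simp) (by simp)
      have hSeq : T ∪ ({x, y, z} : Finset V) = ({x, y, z, w} : Finset V) := by
        by_contra hne
        exact hdiam _ _ hS' hSd hne x z axz (subset_union_left hxT) (subset_union_left hzT)
          (by simp) (by simp)
      have hsub : T ⊆ ({x, y, z, w} : Finset V) := hSeq ▸ subset_union_left
      rcases tri_in_diamond hxy hxz hxw hyz hyw hzw nyw hTtri hsub with h | h
      · exact absurd h hT1e
      · simp [h]
  · intro T hT
    simp only [mem_insert, mem_singleton] at hT
    rcases hT with rfl | rfl
    exacts [hT1, hT2]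

lemma sup_pair {T₁ T₂ : Finset V} :
    ({T₁, T₂} : Finset (Finset V)).sup id = T₁ ∪ T₂ := by
  rw [Finset.sup_insert, Finset.sup_singleton]
  rfl

/-- the central-edge map is a bijection between central edges and diamonds -/
lemma card_central_eq_card_dias (hk4 : G.CliqueFree 4) (hdiam : EdgeDisjointDiamonds G) :
    ((G.edgeFinset).filter (fun e => (trisOn G e).card = 2)).card = (dias G).card := by
  apply Finset.card_bij (fun e _ => (trisOn G e).sup id)
  · -- maps into dias
    intro e he
    rw [mem_filter] at he
    obtain ⟨u, v, huv, rfl⟩ := edge_decomp he.1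
    obtain ⟨T₁, T₂, hT12, hPair⟩ := Finset.card_eq_two.mp he.2
    have h1 : T₁ ∈ trisOn G s(u, v) := by rw [hPair]; simp
    have h2 : T₂ ∈ trisOn G s(u, v) := by rw [hPair]; simp
    rw [mem_trisOn, Finset.mk_mem_sym2_iff] at h1 h2
    rw [hPair, sup_pair, mem_dias]
    exact diamond_of_two_tris hk4 h1.1 h2.1 hT12 huv.ne h1.2.1 h1.2.2 h2.2.1 h2.2.2
  · -- injective
    intro e₁ he₁ e₂ he₂ hEq
    rw [mem_filter] at he₁ he₂
    obtain ⟨u₁, v₁, huv₁, rfl⟩ := edge_decomp he₁.1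
    obtain ⟨u₂, v₂, huv₂, rfl⟩ := edge_decomp he₂.1
    -- the common diamond
    have hSd : IsDiamondOn G ((trisOn G s(u₁, v₁)).sup id) := by
      obtain ⟨T₁, T₂, hT12, hPair⟩ := Finset.card_eq_two.mp he₁.2
      have h1 : T₁ ∈ trisOn G s(u₁, v₁) := by rw [hPair]; simp
      have h2 : T₂ ∈ trisOn G s(u₁, v₁) := by rw [hPair]; simp
      rw [mem_trisOn, Finset.mk_mem_sym2_iff] at h1 h2
      rw [hPair, sup_pair]
      exact diamond_of_two_tris hk4 h1.1 h2.1 hT12 huv₁.ne h1.2.1 h1.2.2 h2.2.1 h2.2.2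
    obtain ⟨x, y, z, w, hset, hxy, hxz, hxw, hyz, hyw, hzw, axy, axz, axw, ayz, azw, nyw⟩ := hSd
    have hSf := diamond_finset hset
    have key : ∀ (u v : V), G.Adj u v → (trisOn G s(u, v)).card = 2 →
        (trisOn G s(u, v)).sup id = ({x, y, z, w} : Finset V) → s(u, v) = s(x, z) := by
      intro u v huv h2 hsup
      obtain ⟨T₁, T₂, hT12, hPair⟩ := Finset.card_eq_two.mp h2
      have h1m : T₁ ∈ trisOn G s(u, v) := by rw [hPair]; simp
      have h2m : T₂ ∈ trisOn G s(u, v) := by rw [hPair]; simp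
      rw [mem_trisOn, Finset.mk_mem_sym2_iff] at h1m h2m
      rw [hPair, sup_pair] at hsup
      have hsub₁ : T₁ ⊆ ({x, y, z, w} : Finset V) := hsup ▸ subset_union_left
      have hsub₂ : T₂ ⊆ ({x, y, z, w} : Finset V) := hsup ▸ subset_union_right
      have e1 := tri_in_diamond hxy hxz hxw hyz hyw hzw nyw h1m.1 hsub₁
      have e2 := tri_in_diamond hxy hxz hxw hyz hyw hzw nyw h2m.1 hsub₂
      -- u and v lie in both triangles, i.e. in {x,z}
      have hcases : (T₁ = {x,y,z} ∧ T₂ = {x,z,w}) ∨ (T₁ = {x,z,w} ∧ T₂ = {x,y,z}) := by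
        rcases e1 with h1 | h1 <;> rcases e2 with h2 | h2
        · exact absurd (h1.trans h2.symm) hT12
        · exact Or.inl ⟨h1, h2⟩
        · exact Or.inr ⟨h1, h2⟩
        · exact absurd (h1.trans h2.symm) hT12
      have hmem : ∀ a : V, a ∈ ({x,y,z} : Finset V) → a ∈ ({x,z,w} : Finset V) →
          a = x ∨ a = z := by
        intro a h1 h2
        simp only [mem_insert, mem_singleton] at h1 h2
        rcases h1 with rfl | rfl | rfl
        · exact Or.inl rfl
        · rcases h2 with h | h | h
          · exact absurd h.symm hxy
          · exact absurd h hyz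
          · exact absurd h hyw
        · exact Or.inr rfl
      have huT : u = x ∨ u = z := by
        rcases hcases with ⟨hA, hB⟩ | ⟨hA, hB⟩
        · exact hmem u (hA ▸ h1m.2.1) (hB ▸ h2m.2.1)
        · exact hmem u (hB ▸ h2m.2.1) (hA ▸ h1m.2.1)
      have hvT : v = x ∨ v = z := by
        rcases hcases with ⟨hA, hB⟩ | ⟨hA, hB⟩
        · exact hmem v (hA ▸ h1m.2.2) (hB ▸ h2m.2.2)
        · exact hmem v (hB ▸ h2m.2.2) (hA ▸ h1m.2.2)
      rcases huT with rfl | rfl <;> rcases hvT with rfl | rfl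
      · exact absurd huv (G.irrefl)
      · rfl
      · exact Sym2.eq_swap
      · exact absurd huv (G.irrefl)
    have k₁ := key u₁ v₁ huv₁ he₁.2 hSf
    have k₂ := key u₂ v₂ huv₂ he₂.2 (hEq.symm.trans hSf)
    exact k₁.trans k₂.symm
  · -- surjective
    intro S hS
    rw [mem_dias] at hS
    obtain ⟨x, y, z, w, hset, hxy, hxz, hxw, hyz, hyw, hzw, axy, axz, axw, ayz, azw, nyw⟩ := hS
    have hSf := diamond_finset hset
    refine ⟨s(x, z), ?_, ?_⟩
    · rw [mem_filter, mem_edgeFinset, mem_edgeSet]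
      refine ⟨axz, ?_⟩
      rw [trisOn_central hk4 hdiam hxy hxz hxw hyz hyw hzw axy axz axw ayz azw nyw]
      have hne12 : ({x, y, z} : Finset V) ≠ ({x, z, w} : Finset V) := by
        intro h
        have : y ∈ ({x, z, w} : Finset V) := h ▸ (by simp : y ∈ ({x, y, z} : Finset V))
        simp only [mem_insert, mem_singleton] at this
        rcases this with h' | h' | h'
        exacts [hxy h'.symm, hyz h', hyw h']
      rw [Finset.card_insert_of_notMem (by simpa using hne12), Finset.card_singleton]
    · rw [trisOn_central hk4 hdiam hxy hxz hxw hyz hyw hzw axy axz axw ayz azw nyw, sup_pair, hSf]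
      ext t
      simp only [mem_union, mem_insert, mem_singleton]
      tauto

end Stmt14Aux

namespace Stmt14Aux
variable {V : Type*} [Fintype V] {G : SimpleGraph V}
open scoped Classical

/-- edges lying on some triangle -/
noncomputable def Etri (G : SimpleGraph V) : Finset (Sym2 V) :=
  G.edgeFinset.filter (fun e => (trisOn G e).Nonempty)

lemma edgesIn_tri_card {T : Finset V} (hT : G.IsNClique 3 T) :
    (G.edgeFinset.filter (fun e => e ∈ T.sym2)).card = 3 := by
  obtain ⟨a, b, c, hab, hac, hbc, rfl⟩ := Finset.card_eq_three.mp hT.2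
  have aab : G.Adj a b := hT.1 (by simp) (by simp) hab
  have aac : G.Adj a c := hT.1 (by simp) (by simp) hac
  have abc : G.Adj b c := hT.1 (by simp) (by simp) hbc
  have hset : (G.edgeFinset.filter (fun e => e ∈ ({a, b, c} : Finset V).sym2))
      = {s(a, b), s(a, c), s(b, c)} := by
    ext e
    induction e with
    | _ u v =>
      simp only [mem_filter, mem_edgeFinset, mem_edgeSet, Finset.mk_mem_sym2_iff,
        mem_insert, mem_singleton, Sym2.eq_iff]
      constructor
      · rintro ⟨hadj, (rfl | rfl | rfl), (rfl | rfl | rfl)⟩ <;>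
          first
          | exact absurd hadj (G.irrefl)
          | simp
      · intro h
        rcases h with (⟨rfl, rfl⟩ | ⟨rfl, rfl⟩) | (⟨rfl, rfl⟩ | ⟨rfl, rfl⟩) |
          (⟨rfl, rfl⟩ | ⟨rfl, rfl⟩) <;>
          refine ⟨?_, by simp, by simp⟩ <;>
          first
          | exact aab
          | exact aab.symm
          | exact aac
          | exact aac.symm
          | exact abc
          | exact abc.symm
  rw [hset]
  rw [Finset.card_insert_of_notMem, Finset.card_insert_of_notMem, Finset.card_singleton]
  · simp [Sym2.eq_iff, hab, hac, hbc, hab.symm, hac.symm, hbc.symm]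
  · simp [Sym2.eq_iff, hab, hac, hbc, hab.symm, hac.symm, hbc.symm]

/-- the fundamental double count: `3t = |Etri| + d` -/
lemma three_t_eq (hk4 : G.CliqueFree 4) (hdiam : EdgeDisjointDiamonds G) :
    3 * (tris G).card = (Etri G).card + (dias G).card := by
  have swap : ∑ T ∈ tris G, (G.edgeFinset.filter (fun e => e ∈ T.sym2)).card
      = ∑ e ∈ G.edgeFinset, (trisOn G e).card := by
    simp_rw [Finset.card_filter]
    rw [Finset.sum_comm]
    apply Finset.sum_congr rfl
    intro e _
    simp_rw [trisOn, Finset.card_filter]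
  have lhs : ∑ T ∈ tris G, (G.edgeFinset.filter (fun e => e ∈ T.sym2)).card
      = 3 * (tris G).card := by
    rw [Finset.sum_congr rfl (fun T hT => edgesIn_tri_card (mem_tris.mp hT))]
    rw [Finset.sum_const, smul_eq_mul, mul_comm]
  have rhs : ∑ e ∈ G.edgeFinset, (trisOn G e).card
      = (Etri G).card + ((G.edgeFinset).filter (fun e => (trisOn G e).card = 2)).card := by
    rw [← Finset.sum_filter_add_sum_filter_not G.edgeFinset (fun e => (trisOn G e).Nonempty)]
    have h0 : ∑ e ∈ G.edgeFinset.filter (fun e => ¬ (trisOn G e).Nonempty), (trisOn G e).card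
        = 0 := by
      apply Finset.sum_eq_zero
      intro e he
      rw [mem_filter, Finset.not_nonempty_iff_eq_empty] at he
      rw [he.2, Finset.card_empty]
    rw [h0, add_zero]
    rw [show G.edgeFinset.filter (fun e => (trisOn G e).Nonempty) = Etri G from rfl]
    have hsplit : ∀ e ∈ Etri G, (trisOn G e).card = 1 + (if (trisOn G e).card = 2 then 1 else 0) := by
      intro e he
      rw [Etri, mem_filter] at he
      obtain ⟨u, v, huv, rfl⟩ := edge_decomp he.1
      have hle := trisOn_card_le_two hk4 hdiam huv
      have hge : 1 ≤ (trisOn G s(u,v)).card := Finset.card_pos.mpr he.2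
      interval_cases h : (trisOn G s(u,v)).card <;> simp
    rw [Finset.sum_congr rfl hsplit, Finset.sum_add_distrib, Finset.sum_const, smul_eq_mul, mul_one]
    congr 1
    have hEq2 : (Etri G).filter (fun e => (trisOn G e).card = 2)
        = G.edgeFinset.filter (fun e => (trisOn G e).card = 2) := by
      rw [Etri, Finset.filter_filter]
      apply Finset.filter_congr
      intro e _
      constructor
      · exact fun h => h.2
      · exact fun h => ⟨Finset.card_pos.mp (by rw [h]; norm_num), h⟩
    rw [← hEq2, Finset.card_filter]
  rw [← lhs, swap, rhs, card_central_eq_card_dias hk4 hdiam]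

end Stmt14Aux
namespace Stmt14Aux
variable {V : Type*} [Fintype V] {G : SimpleGraph V}
open scoped Classical

lemma trisOn_nonempty_iff {u v : V} (huv : G.Adj u v) :
    (trisOn G s(u, v)).Nonempty ↔ ∃ w, G.Adj u w ∧ G.Adj v w := by
  constructor
  · rintro ⟨T, hT⟩
    rw [mem_trisOn, Finset.mk_mem_sym2_iff] at hT
    obtain ⟨x, hxu, hxv, hTeq⟩ := exists_third huv.ne hT.2.1 hT.2.2 hT.1.2
    have hux : G.Adj u x := hT.1.1 hT.2.1 (by rw [hTeq]; simp) (Ne.symm hxu)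
    have hvx : G.Adj v x := hT.1.1 hT.2.2 (by rw [hTeq]; simp) (Ne.symm hxv)
    exact ⟨x, hux, hvx⟩
  · rintro ⟨w, hw1, hw2⟩
    refine ⟨{u, v, w}, ?_⟩
    rw [mem_trisOn, Finset.mk_mem_sym2_iff]
    exact ⟨SimpleGraph.is3Clique_triple_iff.mpr ⟨huv, hw1, hw2⟩, by simp, by simp⟩

lemma minus_edgeFinset : (triangleEdgeDeleted G).edgeFinset = G.edgeFinset \ Etri G := by
  ext e
  induction e with
  | _ u v =>
    simp only [mem_edgeFinset, mem_edgeSet, Finset.mem_sdiff, Etri, Finset.mem_filter]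
    constructor
    · intro h; obtain ⟨hadj, hno⟩ := ted_adj.mp h
      refine ⟨hadj, fun hcon => ?_⟩
      obtain ⟨w, hw⟩ := (trisOn_nonempty_iff hadj).mp hcon.2
      exact hno w hw
    · rintro ⟨hE, hno⟩
      have hadj : G.Adj u v := hE
      exact ted_adj.mpr ⟨hadj, fun w hw => hno ⟨hE, (trisOn_nonempty_iff hadj).mpr ⟨w, hw⟩⟩⟩

end Stmt14Aux

namespace Stmt14Aux
variable {V : Type*} [Fintype V] {G : SimpleGraph V}
open scoped Classical

lemma clique_card_le_three (hk4 : G.CliqueFree 4) {C : Finset V}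
    (hC : G.IsClique (C : Set V)) : C.card ≤ 3 := by
  by_contra h
  push_neg at h
  obtain ⟨t, ht, htc⟩ := Finset.exists_subset_card_eq (show 4 ≤ C.card from h)
  exact hk4 t ⟨hC.subset (Finset.coe_subset.mpr ht), htc⟩

lemma edges_in_small_clique (hk4 : G.CliqueFree 4) {C : Finset V}
    (hC : G.IsClique (C : Set V)) (hn3 : ¬ G.IsNClique 3 C) :
    (G.edgeFinset.filter (fun e => e ∈ C.sym2)).card ≤ 1 := by
  have hle : C.card ≤ 2 := by
    have h3 := clique_card_le_three hk4 hC
    rcases Nat.lt_or_ge C.card 3 with h | h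
    · omega
    · exact absurd ⟨hC, le_antisymm h3 h⟩ hn3
  rw [Finset.card_le_one]
  intro e₁ he₁ e₂ he₂
  rw [Finset.mem_filter] at he₁ he₂
  obtain ⟨u₁, v₁, huv₁, rfl⟩ := edge_decomp he₁.1
  obtain ⟨u₂, v₂, huv₂, rfl⟩ := edge_decomp he₂.1
  rw [Finset.mk_mem_sym2_iff] at he₁ he₂
  have key : ∀ u v : V, G.Adj u v → u ∈ C → v ∈ C → ({u, v} : Finset V) = C := by
    intro u v huv hu hv
    apply Finset.eq_of_subset_of_card_le
    · exact Finset.insert_subset hu (Finset.singleton_subset_iff.mpr hv)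
    · rw [Finset.card_insert_of_notMem (by simp [huv.ne]), Finset.card_singleton]
      exact hle
  have h1 := key u₁ v₁ huv₁ he₁.2.1 he₁.2.2
  have h2 := key u₂ v₂ huv₂ he₂.2.1 he₂.2.2
  have heq : ({u₁, v₁} : Finset V) = {u₂, v₂} := h1.trans h2.symm
  have hu2 : u₂ ∈ ({u₁, v₁} : Finset V) := by rw [heq]; simp
  have hv2 : v₂ ∈ ({u₁, v₁} : Finset V) := by rw [heq]; simp
  simp only [Finset.mem_insert, Finset.mem_singleton] at hu2 hv2
  rcases hu2 with rfl | rfl <;> rcases hv2 with rfl | rfl <;>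
    first
    | exact absurd huv₂ (G.irrefl)
    | rfl
    | exact Sym2.eq_swap
    | exact Sym2.eq_swap.symm

end Stmt14Aux

namespace Stmt14Aux
variable {V : Type*} [Fintype V] {G : SimpleGraph V}
open scoped Classical

/-- CORE: any edge clique cover of a K₄-free graph with edge-disjoint diamonds
has at least `|E| - 2t + d` cliques. -/
lemma cover_bound (hk4 : G.CliqueFree 4) (hdiam : EdgeDisjointDiamonds G)
    {ι : Type*} [Fintype ι] (C : ι → Finset V)
    (hclique : ∀ i, G.IsClique ((C i : Finset V) : Set V))
    (hcover : ∀ u v, G.Adj u v → ∃ i, u ∈ C i ∧ v ∈ C i) :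
    G.edgeFinset.card + (dias G).card ≤ Fintype.card ι + 2 * (tris G).card := by
  set I3 : Finset ι := univ.filter (fun i => G.IsNClique 3 (C i)) with hI3def
  set I2 : Finset ι := univ.filter (fun i => ¬ G.IsNClique 3 (C i)) with hI2def
  set T' : Finset (Finset V) := I3.image C with hT'def
  have hT'tris : T' ⊆ tris G := by
    intro T hT
    rw [hT'def, Finset.mem_image] at hT
    obtain ⟨i, hi, rfl⟩ := hT
    rw [hI3def, Finset.mem_filter] at hi
    exact mem_tris.mpr hi.2
  set U : Finset (Sym2 V) := T'.biUnion (fun T => G.edgeFinset.filter (fun e => e ∈ T.sym2))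
    with hUdef
  set U2 : Finset (Sym2 V) := I2.biUnion (fun i => G.edgeFinset.filter (fun e => e ∈ (C i).sym2))
    with hU2def
  -- h1 : |EF| ≤ |U| + |I2|
  have hcov : G.edgeFinset ⊆ U ∪ U2 := by
    intro e he
    obtain ⟨u, v, huv, rfl⟩ := edge_decomp he
    obtain ⟨i, hui, hvi⟩ := hcover u v huv
    by_cases h3 : G.IsNClique 3 (C i)
    · apply Finset.mem_union_left
      rw [hUdef, Finset.mem_biUnion]
      exact ⟨C i, Finset.mem_image.mpr ⟨i, by rw [hI3def]; simp [h3], rfl⟩,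
        Finset.mem_filter.mpr ⟨he, Finset.mk_mem_sym2_iff.mpr ⟨hui, hvi⟩⟩⟩
    · apply Finset.mem_union_right
      rw [hU2def, Finset.mem_biUnion]
      exact ⟨i, by rw [hI2def]; simp [h3],
        Finset.mem_filter.mpr ⟨he, Finset.mk_mem_sym2_iff.mpr ⟨hui, hvi⟩⟩⟩
  have hU2card : U2.card ≤ I2.card := by
    calc U2.card ≤ ∑ i ∈ I2, (G.edgeFinset.filter (fun e => e ∈ (C i).sym2)).card :=
          Finset.card_biUnion_le
    _ ≤ ∑ i ∈ I2, 1 := by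
        apply Finset.sum_le_sum
        intro i hi
        rw [hI2def, Finset.mem_filter] at hi
        exact edges_in_small_clique hk4 (hclique i) hi.2
    _ = I2.card := by rw [Finset.sum_const, smul_eq_mul, mul_one]
  have h1 : G.edgeFinset.card ≤ U.card + I2.card :=
    (Finset.card_le_card hcov).trans ((Finset.card_union_le _ _).trans (by omega))
  -- diamonds fully covered by T'
  set DF : Finset (Finset V) := (dias G).filter
    (fun S => ∀ T ∈ tris G, T ⊆ S → T ∈ T') with hDFdef
  -- h2 : |U| + |DF| ≤ 3 * |T'|
  have hUE : U ⊆ G.edgeFinset := by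
    intro e he
    rw [hUdef, Finset.mem_biUnion] at he
    obtain ⟨T, _, hT⟩ := he
    exact (Finset.mem_filter.mp hT).1
  have hdouble : ∑ T ∈ T', (G.edgeFinset.filter (fun e => e ∈ T.sym2)).card
      = ∑ e ∈ U, (T'.filter (fun T => e ∈ T.sym2)).card := by
    simp_rw [Finset.card_filter]
    rw [Finset.sum_comm]
    apply (Finset.sum_subset hUE ?_).symm
    intro e heE heU
    apply Finset.sum_eq_zero
    intro T hT
    rw [if_neg]
    intro hmem
    refine absurd ?_ heU
    rw [hUdef, Finset.mem_biUnion]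
    exact ⟨T, hT, Finset.mem_filter.mpr ⟨heE, hmem⟩⟩
  have hsum3 : ∑ T ∈ T', (G.edgeFinset.filter (fun e => e ∈ T.sym2)).card = 3 * T'.card := by
    rw [Finset.sum_congr rfl (fun T hT => edgesIn_tri_card (mem_tris.mp (hT'tris hT)))]
    rw [Finset.sum_const, smul_eq_mul, mul_comm]
  set Ucen : Finset (Sym2 V) :=
    U.filter (fun e => 2 ≤ (T'.filter (fun T => e ∈ T.sym2)).card) with hUcendef
  have h2 : U.card + Ucen.card ≤ 3 * T'.card := by
    rw [← hsum3, hdouble]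
    calc U.card + Ucen.card
        = ∑ e ∈ U, (1 + if 2 ≤ (T'.filter (fun T => e ∈ T.sym2)).card then 1 else 0) := by
          rw [Finset.sum_add_distrib, Finset.sum_const, smul_eq_mul, mul_one, hUcendef,
            Finset.card_filter]
      _ ≤ ∑ e ∈ U, (T'.filter (fun T => e ∈ T.sym2)).card := by
          apply Finset.sum_le_sum
          intro e he
          have hpos : 0 < (T'.filter (fun T => e ∈ T.sym2)).card := by
            rw [hUdef, Finset.mem_biUnion] at he
            obtain ⟨T, hT, hTe⟩ := he
            exact Finset.card_pos.mpr ⟨T, Finset.mem_filter.mpr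
              ⟨hT, (Finset.mem_filter.mp hTe).2⟩⟩
          split <;> omega
  -- |DF| ≤ |Ucen|
  have hq : DF.card ≤ Ucen.card := by
    rcases DF.eq_empty_or_nonempty with hDF | ⟨S₀, hS₀⟩
    · simp [hDF]
    have hS₀d : IsDiamondOn G S₀ := mem_dias.mp (Finset.mem_filter.mp (hDFdef ▸ hS₀)).1
    obtain ⟨x₀, _⟩ := hS₀d
    have hjunk : Sym2 V := s(x₀, x₀)
    set Q : Finset V → Sym2 V → Prop := fun S e =>
      (∃ x z : V, e = s(x, z) ∧ G.Adj x z ∧ x ∈ S ∧ z ∈ S) ∧ e ∈ Ucen with hQdef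
    have hex : ∀ S ∈ DF, ∃ e, Q S e := by
      intro S hS
      rw [hDFdef, Finset.mem_filter] at hS
      obtain ⟨hSd, hfull⟩ := hS
      obtain ⟨x, y, z, w, hset, hxy, hxz, hxw, hyz, hyw, hzw, axy, axz, axw, ayz, azw, nyw⟩ :=
        mem_dias.mp hSd
      have hSf := diamond_finset hset
      have hxS : x ∈ S := by rw [hSf]; simp
      have hzS : z ∈ S := by rw [hSf]; simp
      have hT1 : ({x, y, z} : Finset V) ∈ tris G :=
        mem_tris.mpr (SimpleGraph.is3Clique_triple_iff.mpr ⟨axy, axz, ayz⟩)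
      have hT2 : ({x, z, w} : Finset V) ∈ tris G :=
        mem_tris.mpr (SimpleGraph.is3Clique_triple_iff.mpr ⟨axz, axw, azw⟩)
      have hsub1 : ({x, y, z} : Finset V) ⊆ S := by
        rw [hSf]; intro a ha; simp only [Finset.mem_insert, Finset.mem_singleton] at ha ⊢; tauto
      have hsub2 : ({x, z, w} : Finset V) ⊆ S := by
        rw [hSf]; intro a ha; simp only [Finset.mem_insert, Finset.mem_singleton] at ha ⊢; tauto
      have hT1' : ({x, y, z} : Finset V) ∈ T' := hfull _ hT1 hsub1
      have hT2' : ({x, z, w} : Finset V) ∈ T' := hfull _ hT2 hsub2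
      have hne12 : ({x, y, z} : Finset V) ≠ ({x, z, w} : Finset V) := by
        intro h
        have : y ∈ ({x, z, w} : Finset V) := h ▸ (by simp : y ∈ ({x, y, z} : Finset V))
        simp only [Finset.mem_insert, Finset.mem_singleton] at this
        rcases this with h' | h' | h'
        exacts [hxy h'.symm, hyz h', hyw h']
      have heU : s(x, z) ∈ U := by
        rw [hUdef, Finset.mem_biUnion]
        refine ⟨{x, y, z}, hT1', Finset.mem_filter.mpr ⟨?_, Finset.mk_mem_sym2_iff.mpr ⟨by simp, by simp⟩⟩⟩
        rw [mem_edgeFinset, mem_edgeSet]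
        exact axz
      refine ⟨s(x, z), ⟨x, z, rfl, axz, hxS, hzS⟩, ?_⟩
      rw [hUcendef, Finset.mem_filter]
      refine ⟨heU, ?_⟩
      rw [show (2 : ℕ) ≤ (T'.filter (fun T => s(x,z) ∈ T.sym2)).card ↔
        1 < (T'.filter (fun T => s(x,z) ∈ T.sym2)).card from Iff.rfl, Finset.one_lt_card]
      refine ⟨{x, y, z}, ?_, {x, z, w}, ?_, hne12⟩
      · exact Finset.mem_filter.mpr ⟨hT1', Finset.mk_mem_sym2_iff.mpr ⟨by simp, by simp⟩⟩
      · exact Finset.mem_filter.mpr ⟨hT2', Finset.mk_mem_sym2_iff.mpr ⟨by simp, by simp⟩⟩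
    apply Finset.card_le_card_of_injOn
      (fun S => if h : ∃ e, Q S e then h.choose else s(x₀, x₀))
    · intro S hS
      have h := hex S hS
      simp only [dif_pos h]
      exact h.choose_spec.2
    · intro S₁ hS₁ S₂ hS₂ hfeq
      simp only [Finset.mem_coe] at hS₁ hS₂
      have h₁ := hex S₁ hS₁
      have h₂ := hex S₂ hS₂
      simp only [dif_pos h₁, dif_pos h₂] at hfeq
      obtain ⟨⟨x₁, z₁, he₁, ha₁, hx₁, hz₁⟩, -⟩ := h₁.choose_spec
      obtain ⟨⟨x₂, z₂, he₂, ha₂, hx₂, hz₂⟩, -⟩ := h₂.choose_spec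
      by_contra hne
      have hd₁ : IsDiamondOn G S₁ := mem_dias.mp (Finset.mem_filter.mp (hDFdef ▸ hS₁)).1
      have hd₂ : IsDiamondOn G S₂ := mem_dias.mp (Finset.mem_filter.mp (hDFdef ▸ hS₂)).1
      have hee : s(x₁, z₁) = s(x₂, z₂) := by rw [← he₁, ← he₂, hfeq]
      rw [Sym2.eq_iff] at hee
      rcases hee with ⟨rfl, rfl⟩ | ⟨rfl, rfl⟩
      · exact hdiam S₁ S₂ hd₁ hd₂ hne x₁ z₁ ha₁ hx₁ hz₁ hx₂ hz₂
      · exact hdiam S₁ S₂ hd₁ hd₂ hne x₁ z₁ ha₁ hx₁ hz₁ hz₂ hx₂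
  -- |dias \ DF| ≤ |tris \ T'|
  have h3 : ((dias G) \ DF).card ≤ ((tris G) \ T').card := by
    have hex : ∀ S ∈ (dias G) \ DF, ∃ T, T ∈ tris G ∧ T ⊆ S ∧ T ∉ T' := by
      intro S hS
      rw [Finset.mem_sdiff, hDFdef, Finset.mem_filter] at hS
      obtain ⟨hSd, hnf⟩ := hS
      push_neg at hnf
      obtain ⟨T, hT1, hT2, hT3⟩ := hnf hSd
      exact ⟨T, hT1, hT2, hT3⟩
    apply Finset.card_le_card_of_injOn
      (fun S => if h : ∃ T, T ∈ tris G ∧ T ⊆ S ∧ T ∉ T' then h.choose else ∅)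
    · intro S hS
      have h := hex S hS
      simp only [dif_pos h]
      obtain ⟨h1, _, h3'⟩ := h.choose_spec
      exact Finset.mem_sdiff.mpr ⟨h1, h3'⟩
    · intro S₁ hS₁ S₂ hS₂ hfeq
      simp only [Finset.mem_coe] at hS₁ hS₂
      have h₁ := hex S₁ hS₁
      have h₂ := hex S₂ hS₂
      simp only [dif_pos h₁, dif_pos h₂] at hfeq
      obtain ⟨ht₁, hsub₁, -⟩ := h₁.choose_spec
      obtain ⟨ht₂, hsub₂, -⟩ := h₂.choose_spec
      have hd₁ : IsDiamondOn G S₁ := mem_dias.mp (Finset.mem_sdiff.mp hS₁).1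
      have hd₂ : IsDiamondOn G S₂ := mem_dias.mp (Finset.mem_sdiff.mp hS₂).1
      exact diamond_unique hdiam (mem_tris.mp ht₁) hd₁ hd₂ hsub₁ (hfeq ▸ hsub₂)
  -- assemble
  have hDFsub : DF ⊆ dias G := Finset.filter_subset _ _
  have hT'sub : T' ⊆ tris G := hT'tris
  have e1 : ((dias G) \ DF).card + DF.card = (dias G).card :=
    Finset.card_sdiff_add_card_eq_card hDFsub
  have e2 : ((tris G) \ T').card + T'.card = (tris G).card :=
    Finset.card_sdiff_add_card_eq_card hT'sub
  have e3 : I3.card + I2.card = Fintype.card ι := by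
    rw [hI3def, hI2def, Finset.card_filter_add_card_filter_not, Finset.card_univ]
  have e4 : T'.card ≤ I3.card := Finset.card_image_le
  omega

end Stmt14Aux
namespace Stmt14Aux
variable {V : Type*} [Fintype V] {G : SimpleGraph V}
open scoped Classical

lemma exists_source {r : ℕ} {D : (V ⊕ Fin r) → (V ⊕ Fin r) → Prop} [Nonempty V]
    (hD : ∀ x, ¬ Relation.TransGen D x x) :
    ∃ v₀ : V, ∀ u : V, ¬ D (Sum.inl u) (Sum.inl v₀) := by
  set R : V → V → Prop := fun a b => Relation.TransGen (fun x y : V => D (Sum.inl x) (Sum.inl y)) a b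
    with hR
  letI : IsTrans V R := ⟨fun _ _ _ h₁ h₂ => h₁.trans h₂⟩
  letI : IsIrrefl V R := ⟨by
    intro a ha
    exact hD (Sum.inl a) (Relation.TransGen.lift (p := D) Sum.inl (fun _ _ h => h) a a ha)⟩
  obtain ⟨v₀, -, hmin⟩ := (Finite.wellFounded_of_trans_of_irrefl R).has_min Set.univ
    ⟨Classical.arbitrary V, trivial⟩
  refine ⟨v₀, fun u hu => ?_⟩
  exact hmin u trivial (Relation.TransGen.single hu)

lemma acyclic_of_measure {α : Type*} {D : α → α → Prop} (μ : α → ℕ)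
    (h : ∀ a b, D a b → μ a < μ b) : ∀ x, ¬ Relation.TransGen D x x := by
  have key : ∀ a b, Relation.TransGen D a b → μ a < μ b := by
    intro a b hab
    induction hab with
    | single h' => exact h _ _ h'
    | tail _ h' ih => exact ih.trans (h _ _ h')
  exact fun x hx => lt_irrefl _ (key x x hx)

section Construction

variable [Nonempty V]

/-- a fixed root vertex -/
noncomputable def rootV (V : Type*) [Nonempty V] : V := Classical.arbitrary V

lemma exists_parent (hminus : (triangleEdgeDeleted G).Connected) {v : V} (hv : v ≠ rootV V) :
    ∃ u, (triangleEdgeDeleted G).Adj u v ∧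
      (triangleEdgeDeleted G).dist (rootV V) u < (triangleEdgeDeleted G).dist (rootV V) v := by
  set H := triangleEdgeDeleted G
  obtain ⟨q, hq⟩ := (hminus.preconnected v (rootV V)).exists_walk_length_eq_dist
  cases q with
  | nil => exact absurd rfl hv
  | @cons _ u _ hadj q' =>
    refine ⟨u, hadj.symm, ?_⟩
    have h1 : H.dist (rootV V) u ≤ q'.length := by
      rw [SimpleGraph.dist_comm]
      exact SimpleGraph.dist_le q'
    have h2 : H.dist (rootV V) v = q'.length + 1 := by
      rw [SimpleGraph.dist_comm]
      rw [← hq, SimpleGraph.Walk.length_cons]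
    omega

/-- parent function of a BFS-like tree in `G⁻` -/
noncomputable def par (hminus : (triangleEdgeDeleted G).Connected) (v : V) : V :=
  if h : v = rootV V then v else (exists_parent hminus h).choose

lemma par_spec (hminus : (triangleEdgeDeleted G).Connected) {v : V} (hv : v ≠ rootV V) :
    (triangleEdgeDeleted G).Adj (par hminus v) v ∧
      (triangleEdgeDeleted G).dist (rootV V) (par hminus v) <
        (triangleEdgeDeleted G).dist (rootV V) v := by
  rw [par, dif_neg hv]
  exact (exists_parent hminus hv).choose_spec

/-- the tree edges -/
noncomputable def PE (hminus : (triangleEdgeDeleted G).Connected) : Finset (Sym2 V) :=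
  (univ.erase (rootV V)).image (fun v => s(par hminus v, v))

lemma PE_card (hminus : (triangleEdgeDeleted G).Connected) :
    (PE hminus).card = Fintype.card V - 1 := by
  rw [PE, Finset.card_image_of_injOn, Finset.card_erase_of_mem (mem_univ _), Finset.card_univ]
  intro a ha b hb hab
  simp only [Finset.coe_erase, Set.mem_diff, Finset.coe_univ, Set.mem_univ, true_and,
    Set.mem_singleton_iff] at ha hb
  rw [Sym2.eq_iff] at hab
  rcases hab with ⟨h1, h2⟩ | ⟨h1, h2⟩
  · exact h2
  · have sa := (par_spec hminus ha).2
    have sb := (par_spec hminus hb).2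
    rw [h1] at sa
    rw [← h2] at sb
    omega

lemma PE_subset (hminus : (triangleEdgeDeleted G).Connected) :
    PE hminus ⊆ (triangleEdgeDeleted G).edgeFinset := by
  intro e he
  rw [PE, Finset.mem_image] at he
  obtain ⟨v, hv, rfl⟩ := he
  rw [Finset.mem_erase] at hv
  rw [mem_edgeFinset, mem_edgeSet]
  exact (par_spec hminus hv.1).1

end Construction

end Stmt14Aux

namespace Stmt14Aux
variable {V : Type*} [Fintype V] {G : SimpleGraph V}
open scoped Classical

lemma exists_phy [Nonempty V] (hminus : (triangleEdgeDeleted G).Connected) :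
    ∃ D, IsPhyDigraphOn G
      (((triangleEdgeDeleted G).edgeFinset \ PE hminus).card + (tris G).card) D := by
  set H := triangleEdgeDeleted G with hH
  set EX : Finset (Sym2 V) := H.edgeFinset \ PE hminus with hEX
  set r₀ : ℕ := EX.card + (tris G).card with hr₀
  have hcard : Fintype.card ({e // e ∈ EX} ⊕ {T // T ∈ tris G}) = r₀ := by
    rw [Fintype.card_sum, Fintype.card_coe, Fintype.card_coe]
  set φ : ({e // e ∈ EX} ⊕ {T // T ∈ tris G}) ≃ Fin r₀ := Fintype.equivFinOfCardEq hcard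
    with hφ
  refine ⟨fun a b =>
    match a, b with
    | Sum.inl u, Sum.inl v => v ≠ rootV V ∧ u = par hminus v
    | Sum.inl u, Sum.inr j =>
        (match φ.symm j with
         | Sum.inl e => u ∈ (e.1 : Sym2 V)
         | Sum.inr T => u ∈ T.1)
    | Sum.inr _, _ => False, ?_, ?_, ?_⟩
  · -- acyclic
    apply acyclic_of_measure (Sum.elim (H.dist (rootV V))
      (fun _ => (univ.sup (H.dist (rootV V))) + 1))
    rintro (u | i) (v | j) hab
    · obtain ⟨hv, rfl⟩ := hab
      exact (par_spec hminus hv).2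
    · exact Nat.lt_succ_of_le (show H.dist (rootV V) u ≤ _ from Finset.le_sup (mem_univ u))
    · exact hab.elim
    · exact hab.elim
  · -- adjacency
    intro u v
    constructor
    · intro hadj
      refine ⟨by simpa using hadj.ne, ?_⟩
      by_cases hw : ∃ w, G.Adj u w ∧ G.Adj v w
      · obtain ⟨w, hw1, hw2⟩ := hw
        have hT : ({u, v, w} : Finset V) ∈ tris G :=
          mem_tris.mpr (SimpleGraph.is3Clique_triple_iff.mpr ⟨hadj, hw1, hw2⟩)
        refine Or.inr (Or.inr ⟨Sum.inr (φ (Sum.inr ⟨({u, v, w} : Finset V), hT⟩)), ?_, ?_⟩)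
        · show (match φ.symm (φ (Sum.inr ⟨{u, v, w}, hT⟩)) with
            | Sum.inl e => u ∈ (e.1 : Sym2 V)
            | Sum.inr T => u ∈ T.1)
          rw [Equiv.symm_apply_apply]
          simp
        · show (match φ.symm (φ (Sum.inr ⟨{u, v, w}, hT⟩)) with
            | Sum.inl e => v ∈ (e.1 : Sym2 V)
            | Sum.inr T => v ∈ T.1)
          rw [Equiv.symm_apply_apply]
          simp
      · push_neg at hw
        have hHadj : H.Adj u v := ted_adj.mpr ⟨hadj, fun w h => hw w h.1 h.2⟩
        have heF : s(u, v) ∈ H.edgeFinset := by rw [mem_edgeFinset, mem_edgeSet]; exact hHadj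
        by_cases he : s(u, v) ∈ PE hminus
        · rw [PE, Finset.mem_image] at he
          obtain ⟨x, hx, hxe⟩ := he
          rw [Finset.mem_erase] at hx
          rw [Sym2.eq_iff] at hxe
          rcases hxe with ⟨h1, h2⟩ | ⟨h1, h2⟩
          · exact Or.inl ⟨h2 ▸ hx.1, by rw [← h1, h2]⟩
          · exact Or.inr (Or.inl ⟨h2 ▸ hx.1, by rw [← h1, h2]⟩)
        · have hmem : s(u, v) ∈ EX := Finset.mem_sdiff.mpr ⟨heF, he⟩
          refine Or.inr (Or.inr ⟨Sum.inr (φ (Sum.inl ⟨s(u, v), hmem⟩)), ?_, ?_⟩)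
          · show (match φ.symm (φ (Sum.inl ⟨s(u, v), hmem⟩)) with
              | Sum.inl e => u ∈ (e.1 : Sym2 V)
              | Sum.inr T => u ∈ T.1)
            rw [Equiv.symm_apply_apply]
            simp
          · show (match φ.symm (φ (Sum.inl ⟨s(u, v), hmem⟩)) with
              | Sum.inl e => v ∈ (e.1 : Sym2 V)
              | Sum.inr T => v ∈ T.1)
            rw [Equiv.symm_apply_apply]
            simp
    · rintro ⟨hne, harc | harc | ⟨w, hDu, hDv⟩⟩
      · obtain ⟨hv, rfl⟩ := harc
        exact (ted_adj.mp (par_spec hminus hv).1).1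
      · obtain ⟨hv, rfl⟩ := harc
        exact (ted_adj.mp (par_spec hminus hv).1).1.symm
      · have hne' : u ≠ v := by simpa using hne
        rcases w with x | j
        · obtain ⟨-, h1⟩ := hDu
          obtain ⟨-, h2⟩ := hDv
          exact absurd (h1.trans h2.symm) (by simpa using hne')
        · have hDu2 : (match φ.symm j with
            | Sum.inl e => u ∈ (e.1 : Sym2 V)
            | Sum.inr T => u ∈ T.1) := hDu
          have hDv2 : (match φ.symm j with
            | Sum.inl e => v ∈ (e.1 : Sym2 V)
            | Sum.inr T => v ∈ T.1) := hDv
          rcases hc : φ.symm j with e | T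
          · have hDu' : u ∈ (e.1 : Sym2 V) := by rw [hc] at hDu2; exact hDu2
            have hDv' : v ∈ (e.1 : Sym2 V) := by rw [hc] at hDv2; exact hDv2
            have heq : (e.1 : Sym2 V) = s(u, v) :=
              Sym2.eq_of_ne_mem hne' hDu' hDv' (Sym2.mem_iff.mpr (Or.inl rfl))
                (Sym2.mem_iff.mpr (Or.inr rfl))
            have := (Finset.mem_sdiff.mp e.2).1
            rw [heq, mem_edgeFinset, mem_edgeSet] at this
            exact (ted_adj.mp this).1
          · have hDu' : u ∈ T.1 := by rw [hc] at hDu2; exact hDu2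
            have hDv' : v ∈ T.1 := by rw [hc] at hDv2; exact hDv2
            exact (mem_tris.mp T.2).1 hDu' hDv' hne'
  · -- no arcs from extras into G
    intro j v h
    exact h

end Stmt14Aux

open Stmt14Aux

theorem stmt14 {V : Type*} [Fintype V] (G : SimpleGraph V)
    (hconn : G.Connected) (hk4 : G.CliqueFree 4)
    (hdiam : EdgeDisjointDiamonds G)
    (hminus : (triangleEdgeDeleted G).Connected) :
    (phylogenyNumber G : ℤ) =
      G.edgeSet.ncard - Fintype.card V - 2 * triangleCount G + diamondCount G + 1 := by
  classical
  have hV : Nonempty V := hconn.nonempty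
  -- conversions to finset cardinalities
  have hTc : triangleCount G = (tris G).card := by
    rw [triangleCount, show {S : Finset V | G.IsNClique 3 S} = ↑(tris G) by ext S; simp [tris],
      Set.ncard_coe_finset]
  have hDc : diamondCount G = (dias G).card := by
    rw [diamondCount, show {S : Finset V | IsDiamondOn G S} = ↑(dias G) by ext S; simp [dias],
      Set.ncard_coe_finset]
  have hEc : G.edgeSet.ncard = G.edgeFinset.card := by
    rw [← SimpleGraph.coe_edgeFinset, Set.ncard_coe_finset]
  -- basic counting identities
  have hsplit : (triangleEdgeDeleted G).edgeFinset.card + (Etri G).card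
      = G.edgeFinset.card := by
    rw [minus_edgeFinset]
    exact Finset.card_sdiff_add_card_eq_card (Finset.filter_subset _ _)
  have h3t : 3 * (tris G).card = (Etri G).card + (dias G).card := three_t_eq hk4 hdiam
  have hPEc : (PE hminus).card = Fintype.card V - 1 := PE_card hminus
  have hPEsub : PE hminus ⊆ (triangleEdgeDeleted G).edgeFinset := PE_subset hminus
  have hEXc : ((triangleEdgeDeleted G).edgeFinset \ PE hminus).card + (PE hminus).card
      = (triangleEdgeDeleted G).edgeFinset.card :=
    Finset.card_sdiff_add_card_eq_card hPEsub
  have hn1 : 1 ≤ Fintype.card V := Fintype.card_pos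
  set r₀ : ℕ := ((triangleEdgeDeleted G).edgeFinset \ PE hminus).card + (tris G).card with hr₀
  -- upper bound : membership
  have hmem : r₀ ∈ {r | ∃ D, IsPhyDigraphOn G r D} := exists_phy hminus
  -- lower bound
  have hlb : ∀ r ∈ {r | ∃ D, IsPhyDigraphOn G r D}, r₀ ≤ r := by
    rintro r ⟨D, hD1, hD2, hD3⟩
    obtain ⟨v₀, hv₀⟩ := exists_source hD1
    set ι := {x : V ⊕ Fin r // x ≠ Sum.inl v₀} with hι
    set C : ι → Finset V := fun x =>
      (univ.filter (fun u => D (Sum.inl u) x.1)) ∪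
        (Sum.elim (fun v => {v}) (fun _ => (∅ : Finset V)) x.1) with hC
    have hclique : ∀ i : ι, G.IsClique ((C i : Finset V) : Set V) := by
      rintro ⟨x, hx⟩ a ha b hb hab
      simp only [hC, Finset.coe_union, Set.mem_union, Finset.coe_filter, Set.mem_setOf_eq,
        Finset.mem_univ, true_and, Finset.mem_coe] at ha hb
      have adj_of_phy : ∀ p q : V, p ≠ q →
          (D (Sum.inl p) (Sum.inl q) ∨ D (Sum.inl q) (Sum.inl p) ∨
            ∃ w, D (Sum.inl p) w ∧ D (Sum.inl q) w) → G.Adj p q := by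
        intro p q hpq harc
        exact (hD2 p q).mpr ⟨by simpa using hpq, harc⟩
      rcases ha with ha | ha <;> rcases hb with hb | hb
      · exact adj_of_phy a b hab (Or.inr (Or.inr ⟨x, ha, hb⟩))
      · rcases x with v | j
        · simp only [Sum.elim_inl, Finset.coe_singleton, Set.mem_singleton_iff, Finset.mem_singleton] at hb
          subst hb
          exact adj_of_phy a b hab (Or.inl ha)
        · simp at hb
      · rcases x with v | j
        · simp only [Sum.elim_inl, Finset.coe_singleton, Set.mem_singleton_iff, Finset.mem_singleton] at ha
          subst ha
          exact adj_of_phy a b hab (Or.inr (Or.inl hb))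
        · simp at ha
      · rcases x with v | j
        · simp only [Sum.elim_inl, Finset.coe_singleton, Set.mem_singleton_iff, Finset.mem_singleton] at ha hb
          exact absurd (ha.trans hb.symm) hab
        · simp at ha
    have hcover : ∀ u v, G.Adj u v → ∃ i : ι, u ∈ C i ∧ v ∈ C i := by
      intro u v hadj
      obtain ⟨hne, harc⟩ := (hD2 u v).mp hadj
      rcases harc with h | h | ⟨w, h1, h2⟩
      · have hvne : (Sum.inl v : V ⊕ Fin r) ≠ Sum.inl v₀ := by
          rintro heq
          rw [heq] at h
          exact hv₀ u h
        refine ⟨⟨Sum.inl v, hvne⟩, ?_, ?_⟩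
        · rw [hC]
          exact Finset.mem_union_left _ (Finset.mem_filter.mpr ⟨mem_univ _, h⟩)
        · rw [hC]
          exact Finset.mem_union_right _ (by simp)
      · have hune : (Sum.inl u : V ⊕ Fin r) ≠ Sum.inl v₀ := by
          rintro heq
          rw [heq] at h
          exact hv₀ v h
        refine ⟨⟨Sum.inl u, hune⟩, ?_, ?_⟩
        · rw [hC]
          exact Finset.mem_union_right _ (by simp)
        · rw [hC]
          exact Finset.mem_union_left _ (Finset.mem_filter.mpr ⟨mem_univ _, h⟩)
      · have hwne : w ≠ Sum.inl v₀ := by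
          rintro rfl
          exact hv₀ u h1
        refine ⟨⟨w, hwne⟩, ?_, ?_⟩
        · rw [hC]
          exact Finset.mem_union_left _ (Finset.mem_filter.mpr ⟨mem_univ _, h1⟩)
        · rw [hC]
          exact Finset.mem_union_left _ (Finset.mem_filter.mpr ⟨mem_univ _, h2⟩)
    have hbound := cover_bound hk4 hdiam C hclique hcover
    have hcardι : Fintype.card ι = Fintype.card V + r - 1 := by
      have h1 := Fintype.card_subtype_compl (fun x : V ⊕ Fin r => x = Sum.inl v₀)
      rw [Fintype.card_subtype_eq, Fintype.card_sum, Fintype.card_fin] at h1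
      calc Fintype.card ι = Fintype.card {x : V ⊕ Fin r // ¬ (x = Sum.inl v₀)} :=
            Fintype.card_congr (Equiv.refl _)
        _ = Fintype.card V + r - 1 := h1
    rw [hcardι] at hbound
    omega
  have hphy : phylogenyNumber G = r₀ :=
    le_antisymm (Nat.sInf_le hmem) (le_csInf ⟨r₀, hmem⟩ hlb)
  rw [hphy, hTc, hDc, hEc]
  omega
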